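/- For |a| < 1 and any b, (1/2πi) ∮_C ((z+b)/(z+a)²) · ((z^{-1}+b)/(z^{-1}+a)²) · z^{-1} dz = (4ab − (b²+1)(a²+1)) / (a²−1)³. -/

import Mathlib

/-!
Clearing `z⁻¹`, the integrand is the rational function `(z + b)(1 + b z) / ((z + a)² (1 + a z)²)`.
Its only pole in the unit disc is the double pole at `-a` (the other one, `-1/a`, lies outside),
so in the partial fraction decomposition `A/(z + a) + B/(z + a)² + (E + D z)/(1 + a z)²` the last
term integrates to zero by Cauchy's theorem, the second one has no residue, and the integral is
`2πi A` with `A` the claimed value.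
-/

open Complex Metric Real

theorem circleIntegral_div_sub_add_div_sub_sq_add {c w : ℂ} {R : ℝ} (hw : w ∈ ball c R)
    {g : ℂ → ℂ} (hg : DiffContOnCl ℂ g (ball c R)) (A B : ℂ) :
    (∮ z in C(c, R), (A / (z - w) + B / (z - w) ^ 2 + g z)) = 2 * π * I * A := by
  have hR : 0 ≤ R := dist_nonneg.trans hw.le
  have hw' : w ∉ sphere c |R| := by
    rw [abs_of_nonneg hR]
    exact hw.ne
  have hsimple : CircleIntegrable (fun z => A * (z - w)⁻¹) c R :=
    (circleIntegrable_sub_inv_iff.2 (Or.inr hw')).const_smul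
  have hdouble : CircleIntegrable (fun z => B * (z - w) ^ (-2 : ℤ)) c R :=
    (circleIntegrable_sub_zpow_iff.2 (Or.inr (Or.inr hw'))).const_smul
  have hg' : CircleIntegrable g c R :=
    (hg.continuousOn_ball.mono sphere_subset_closedBall).circleIntegrable hR
  have hsq (z : ℂ) : B / (z - w) ^ 2 = B * (z - w) ^ (-2 : ℤ) := by
    rw [div_eq_mul_inv, zpow_neg, zpow_ofNat]
  simp only [div_eq_mul_inv A, hsq]
  rw [circleIntegral.integral_add (f := fun z => A * (z - w)⁻¹ + B * (z - w) ^ (-2 : ℤ))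
      (hsimple.add hdouble) hg', circleIntegral.integral_add hsimple hdouble,
    circleIntegral.integral_const_mul, circleIntegral.integral_const_mul,
    circleIntegral.integral_sub_inv_of_mem_ball hw,
    circleIntegral.integral_sub_zpow_of_ne (by decide), hg.circleIntegral_eq_zero hR]
  ring

theorem one_add_mul_ne_zero_of_norm_lt_one {R : Type*} [NormedRing R] [NormOneClass R] {a z : R}
    (ha : ‖a‖ < 1) (hz : ‖z‖ ≤ 1) : 1 + a * z ≠ 0 := by
  intro h
  have hnorm : ‖a * z‖ < 1 :=
    (norm_mul_le a z).trans_lt (mul_lt_one_of_nonneg_of_lt_one_left (norm_nonneg a) ha hz)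
  rw [eq_neg_of_add_eq_zero_right h, norm_neg, norm_one] at hnorm
  exact hnorm.false

theorem armaIntegrand_exists_partialFraction {K : Type*} [Field K] {a : K} (ha : a ^ 2 ≠ 1) (b : K) :
    ∃ B D E : K, ∀ z : K, z ≠ 0 → z + a ≠ 0 → 1 + a * z ≠ 0 →
      (z + b) / (z + a) ^ 2 * ((z⁻¹ + b) / (z⁻¹ + a) ^ 2) * z⁻¹ =
        (4 * a * b - (b ^ 2 + 1) * (a ^ 2 + 1)) / (a ^ 2 - 1) ^ 3 / (z + a)
          + B / (z + a) ^ 2 + (E + D * z) / (1 + a * z) ^ 2 := by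
  have hd : a ^ 2 - 1 ≠ 0 := sub_ne_zero.2 ha
  set A := (4 * a * b - (b ^ 2 + 1) * (a ^ 2 + 1)) / (a ^ 2 - 1) ^ 3 with hA
  set B := (b - a) * (1 - a * b) / (a ^ 2 - 1) ^ 2 with hB
  set D := -a ^ 2 * A
  set E := b - a * (2 - a ^ 2) * A - a ^ 2 * B
  have hpoly (z : K) : (z + b) * (1 + b * z)
      = A * (z + a) * (1 + a * z) ^ 2 + B * (1 + a * z) ^ 2 + (E + D * z) * (z + a) ^ 2 := by
    simp only [E, D, hA, hB]
    field_simp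
    ring
  clear_value A B D E
  refine ⟨B, D, E, fun z hz h1 h2 => ?_⟩
  rw [mul_comm a z] at h2 ⊢
  field_simp
  linear_combination hpoly z

/-- The metric tensor entry `g₁₁` of the scalar ARMA(1,1) parametrization:
`(1/2πi) ∮_C ((z+b)/(z+a)²)((z⁻¹+b)/(z⁻¹+a)²) z⁻¹ dz = (4ab-(b²+1)(a²+1))/(a²-1)³`
for `|a| < 1`. -/
theorem stmt9 (a b : ℂ) (ha : ‖a‖ < 1) :
    (1 / (2 * (Real.pi : ℂ) * Complex.I)) *
        (∮ z in C(0, 1), ((z + b) / (z + a) ^ 2) * ((z⁻¹ + b) / (z⁻¹ + a) ^ 2) * z⁻¹) =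
      (4 * a * b - (b ^ 2 + 1) * (a ^ 2 + 1)) / (a ^ 2 - 1) ^ 3 := by
  have ha2 : a ^ 2 ≠ 1 := fun h => by
    simpa [← norm_pow, h] using pow_lt_one₀ (norm_nonneg a) ha two_ne_zero
  have hpole : -a ∈ ball (0 : ℂ) 1 := by simpa using ha
  obtain ⟨B, D, E, hpf⟩ := armaIntegrand_exists_partialFraction ha2 b
  have hrem : DiffContOnCl ℂ (fun z => (E + D * z) / (1 + a * z) ^ 2) (ball 0 1) := by
    refine DifferentiableOn.diffContOnCl_ball (U := {z | 1 + a * z ≠ 0}) ?_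
      fun z hz => one_add_mul_ne_zero_of_norm_lt_one ha (mem_closedBall_zero_iff.1 hz)
    exact DifferentiableOn.div (by fun_prop) (by fun_prop) fun z hz => pow_ne_zero 2 hz
  have hsphere : Set.EqOn (fun z => ((z + b) / (z + a) ^ 2) * ((z⁻¹ + b) / (z⁻¹ + a) ^ 2) * z⁻¹)
      (fun z => (4 * a * b - (b ^ 2 + 1) * (a ^ 2 + 1)) / (a ^ 2 - 1) ^ 3 / (z - -a)
        + B / (z - -a) ^ 2 + (E + D * z) / (1 + a * z) ^ 2) (sphere 0 1) := by
    intro z hz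
    rw [mem_sphere_zero_iff_norm] at hz
    simp only [sub_neg_eq_add]
    refine hpf z (norm_ne_zero_iff.1 (hz ▸ one_ne_zero)) (fun h => ?_)
      (one_add_mul_ne_zero_of_norm_lt_one ha hz.le)
    rw [eq_neg_of_add_eq_zero_left h, norm_neg] at hz
    linarith
  rw [circleIntegral.integral_congr zero_le_one hsphere,
    circleIntegral_div_sub_add_div_sub_sq_add hpole hrem]
  field_simp
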